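/- For $\alpha > -1/2$, $T > 0$, and $i \ge 0$, the Legendre coefficients $F_i^\alpha = \int_0^T t^\alpha \hat P(i,t)\,dt$ satisfy the recurrence $F_{i+1}^\alpha = \sqrt{\frac{2i+3}{2i+1}}\,\frac{\alpha - i}{\alpha + i + 2}\, F_i^\alpha$, with $F_0^\alpha = \frac{T^\alpha\sqrt{T}}{\alpha+1}$. -/

import Mathlib

open Real

noncomputable def legendreP (i : ℕ) (x : ℝ) : ℝ :=
  (1 / (2 ^ i * (Nat.factorial i))) * iteratedDeriv i (fun y : ℝ => (y ^ 2 - 1) ^ i) x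

noncomputable def legendreHat (T : ℝ) (i : ℕ) (t : ℝ) : ℝ :=
  Real.sqrt ((2 * i + 1) / T) * legendreP i (2 * t / T - 1)

/-- Legendre coefficient of the power function `t ↦ t^α` on `[0,T]`. -/
noncomputable def F (T α : ℝ) (i : ℕ) : ℝ := ∫ t in (0:ℝ)..T, t ^ α * legendreHat T i t

/-!
Rodrigues' formula turns `F T α i` into a multiple of `∫₀ᵀ t^α (d/dt)^i (t (t - T))^i dt`.
Integrating by parts `i` times moves the derivatives onto `t^α`; no boundary terms appear because
the `k`-th derivative of `(t (t - T))^i` still vanishes to order `i - k` at both ends. What is left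
is the Beta integral `∫₀ᵀ t^α (T - t)^i dt = i! T^(α+i+1) / ((α+1) ⋯ (α+i+1))`, so
`F T α i = √((2i+1)/T) T^(α+1) α(α-1)⋯(α-i+1) / ((α+1)⋯(α+i+1))`,
and the recurrence is the ratio of two consecutive such closed forms.
-/

open Polynomial Set Filter Topology intervalIntegral
open MeasureTheory (volume)

theorem intervalIntegrable_of_eqOn_rpow_mul {T γ : ℝ} (hT : 0 ≤ T) (hγ : -1 < γ)
    {f g : ℝ → ℝ} (hg : ContinuousOn g (Icc 0 T)) (hfg : EqOn (fun t ↦ t ^ γ * g t) f (Ioc 0 T)) :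
    IntervalIntegrable f volume 0 T :=
  ((intervalIntegrable_rpow' hγ).mul_continuousOn (by rwa [uIcc_of_le hT])).congr
    (by rwa [uIoc_of_le hT])

theorem X_mul_derivative_X_pow_mul {R : Type*} [CommSemiring R] (m : ℕ) (p : R[X]) :
    X * derivative (X ^ m * p) = X ^ m * (C (m : R) * p + X * derivative p) := by
  cases m with
  | zero => simp
  | succ m => simp only [derivative_mul, derivative_X_pow]; push_cast; ring

/-- The boundary term `t ^ β * Q t` vanishes at `T` because `Q T = 0`, and at `0` because
`X ^ m ∣ Q` with `β + m > 0`. -/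
theorem integral_rpow_mul_derivative_eval {T β : ℝ} (hT : 0 < T) {m : ℕ} (hβm : 0 < β + m)
    {Q : ℝ[X]} (hXQ : X ^ m ∣ Q) (hQT : Q.IsRoot T) :
    ∫ t in 0..T, t ^ β * (derivative Q).eval t = -β * ∫ t in 0..T, t ^ (β - 1) * Q.eval t := by
  obtain ⟨R, rfl⟩ := hXQ
  have hγ : -1 < β - 1 + m := by linarith
  have hQ : IntervalIntegrable (fun t ↦ t ^ (β - 1) * (X ^ m * R).eval t) volume 0 T :=
    intervalIntegrable_of_eqOn_rpow_mul hT.le hγ (g := fun t ↦ R.eval t) (by fun_prop)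
      fun t ht ↦ by simp [rpow_add_natCast ht.1.ne', mul_assoc]
  have hQ' : IntervalIntegrable (fun t ↦ t ^ β * (derivative (X ^ m * R)).eval t) volume 0 T := by
    refine intervalIntegrable_of_eqOn_rpow_mul hT.le hγ
      (g := fun t ↦ (C (m : ℝ) * R + X * derivative R).eval t) (by fun_prop) fun t ht ↦ ?_
    have hX := congrArg (eval t) (X_mul_derivative_X_pow_mul m R)
    simp only [eval_mul, eval_X, eval_pow] at hX
    dsimp only
    rw [rpow_add_natCast ht.1.ne', mul_assoc, ← hX, rpow_sub_one ht.1.ne']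
    field_simp [ht.1.ne']
  have hderiv : ∀ t ∈ Ioo 0 T, HasDerivAt (fun t ↦ t ^ β * (X ^ m * R).eval t)
      (β * (t ^ (β - 1) * (X ^ m * R).eval t) + t ^ β * (derivative (X ^ m * R)).eval t) t :=
    fun t ht ↦ ((hasDerivAt_rpow_const (Or.inl ht.1.ne')).mul
      (Polynomial.hasDerivAt _ t)).congr_deriv (by ring)
  have hlim_zero : Tendsto (fun t ↦ t ^ β * (X ^ m * R).eval t) (𝓝[>] 0) (𝓝 0) := by
    have hc : ContinuousAt (fun t : ℝ ↦ t ^ (β + m) * R.eval t) 0 :=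
      (continuousAt_rpow_const 0 _ (Or.inr hβm.le)).mul (R.continuous.continuousAt)
    refine Tendsto.congr' ?_ (by simpa [zero_rpow hβm.ne'] using hc.continuousWithinAt.tendsto)
    filter_upwards [self_mem_nhdsWithin] with t ht
    simp [rpow_add_natCast (ne_of_gt ht), mul_assoc]
  have hlim_T : Tendsto (fun t ↦ t ^ β * (X ^ m * R).eval t) (𝓝[<] T) (𝓝 0) := by
    have hc : ContinuousAt (fun t : ℝ ↦ t ^ β * (X ^ m * R).eval t) T :=
      (continuousAt_rpow_const T _ (Or.inl hT.ne')).mul (Polynomial.continuousAt _)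
    simpa [hQT.eq_zero] using hc.continuousWithinAt.tendsto
  have h := integral_eq_sub_of_hasDerivAt_of_tendsto hT hderiv ((hQ.const_mul β).add hQ')
    hlim_zero hlim_T
  rw [integral_add (hQ.const_mul β) hQ', integral_const_mul] at h
  linarith

theorem integral_rpow_mul_iterate_derivative_eval {T α : ℝ} (hT : 0 < T) (hα : -1 < α) (k : ℕ)
    {W : ℝ[X]} (hW : (X * (X - C T)) ^ k ∣ W) :
    ∫ t in 0..T, t ^ α * (derivative^[k] W).eval t
      = (-1) ^ k * (descPochhammer ℝ k).eval α * ∫ t in 0..T, t ^ (α - k) * W.eval t := by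
  induction k generalizing W with
  | zero => simp
  | succ k ih =>
    have hX : X ^ (k + 1) ∣ W := (Dvd.intro _ (mul_pow X (X - C T) (k + 1)).symm).trans hW
    have hT' : W.IsRoot T := dvd_iff_isRoot.mp <|
      (dvd_pow (dvd_mul_left (X - C T) X) (Nat.succ_ne_zero k)).trans hW
    have hW' : (X * (X - C T)) ^ k ∣ derivative W := by
      simpa using pow_sub_one_dvd_derivative_of_pow_dvd hW
    rw [Function.iterate_succ_apply, ih hW',
      integral_rpow_mul_derivative_eval hT (by push_cast; linarith) hX hT',
      descPochhammer_succ_eval, show α - k - 1 = α - ↑(k + 1) by push_cast; ring]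
    ring

open Nat in
theorem integral_rpow_mul_sub_pow {T α : ℝ} (hT : 0 < T) (hα : -1 < α) (n : ℕ) :
    ∫ t in 0..T, t ^ α * (T - t) ^ n
      = (n ! : ℝ) * T ^ (α + n + 1) / (ascPochhammer ℝ (n + 1)).eval (α + 1) := by
  induction n generalizing α with
  | zero => simp [integral_rpow (Or.inl hα), zero_rpow (by linarith : α + 1 ≠ 0)]
  | succ n ih =>
    have hibp := integral_rpow_mul_derivative_eval hT (β := α + 1) (m := 0) (by simp; linarith)
      (one_dvd ((C T - X) ^ (n + 1))) (by simp)
    have hconst : ∫ t in 0..T, t ^ (α + 1) * -(((n + 1 : ℕ) : ℝ) * (T - t) ^ n)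
        = -((n + 1 : ℕ) : ℝ) * ∫ t in 0..T, t ^ (α + 1) * (T - t) ^ n := by
      rw [← integral_const_mul]; congr 1; ext; ring
    simp only [derivative_pow, derivative_sub, derivative_C, derivative_X, eval_mul, eval_pow,
      eval_sub, eval_C, eval_X, add_sub_cancel_right, zero_sub, mul_neg_one, eval_neg,
      Nat.add_sub_cancel] at hibp
    rw [hconst, ih (by linarith), show α + 1 + n + 1 = α + ↑(n + 1) + 1 by push_cast; ring] at hibp
    have hA : 0 < (ascPochhammer ℝ (n + 1)).eval (α + 1 + 1) := ascPochhammer_pos _ _ (by linarith)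
    have hα1 : α + 1 ≠ 0 := by linarith
    rw [ascPochhammer_succ_left, eval_mul, eval_X, eval_comp, eval_add, eval_X, eval_one,
      factorial_succ, cast_mul]
    field_simp at hibp ⊢
    linear_combination hibp

theorem Polynomial.iteratedDeriv_eval {𝕜 : Type*} [NontriviallyNormedField 𝕜] (p : 𝕜[X])
    (n : ℕ) : iteratedDeriv n (fun x ↦ p.eval x) = fun x ↦ (derivative^[n] p).eval x := by
  induction n with
  | zero => simp
  | succ n ih =>
    rw [iteratedDeriv_succ, ih]
    funext x
    rw [Function.iterate_succ_apply', Polynomial.deriv]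

open Nat in
theorem legendreP_two_mul_div_sub_one {T : ℝ} (hT : T ≠ 0) (i : ℕ) (t : ℝ) :
    legendreP i (2 * t / T - 1)
      = ((i ! : ℝ) * T ^ i)⁻¹ * (derivative^[i] ((X * (X - C T)) ^ i)).eval t := by
  set h : ℝ → ℝ := fun y ↦ (y ^ 2 - 1) ^ i
  have hrescale : (fun t ↦ h (2 / T * t - 1))
      = fun t ↦ (4 / T ^ 2) ^ i * ((X * (X - C T)) ^ i).eval t := by
    funext t
    simp only [h, eval_pow, eval_mul, eval_X, eval_sub, eval_C, ← mul_pow]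
    field_simp
    ring
  have hchain := congrFun (iteratedDeriv_comp_const_mul (n := i) (f := fun z ↦ h (z - 1))
    (by fun_prop) (2 / T)) t
  rw [hrescale, iteratedDeriv_const_mul_field, iteratedDeriv_eval,
    iteratedDeriv_comp_sub_const] at hchain
  have hderiv : iteratedDeriv i h (2 / T * t - 1)
      = (2 / T) ^ i * (derivative^[i] ((X * (X - C T)) ^ i)).eval t := by
    refine mul_left_cancel₀ (pow_ne_zero i (div_ne_zero two_ne_zero hT)) ?_
    rw [← hchain, ← mul_assoc, ← mul_pow]
    congr 2
    field_simp
    norm_num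
  rw [legendreP, show 2 * t / T - 1 = 2 / T * t - 1 by ring]
  change _ * iteratedDeriv i h _ = _
  rw [hderiv, div_pow]
  field_simp

theorem integral_rpow_sub_mul_X_mul_X_sub_C_pow_eval {T : ℝ} (hT : 0 ≤ T) (α : ℝ) (i : ℕ) :
    ∫ t in 0..T, t ^ (α - i) * ((X * (X - C T)) ^ i).eval t
      = (-1) ^ i * ∫ t in 0..T, t ^ α * (T - t) ^ i := by
  rw [← integral_const_mul]
  refine integral_congr_ae (.of_forall fun t ht ↦ ?_)
  rw [uIoc_of_le hT] at ht
  have hpow : t ^ (α - i) * t ^ i = t ^ α := by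
    rw [← rpow_add_natCast ht.1.ne', sub_add_cancel]
  simp only [eval_pow, eval_mul, eval_X, eval_sub, eval_C, mul_pow, ← hpow]
  rw [← neg_sub T t, neg_pow]
  ring

open Nat in
theorem F_eq_descPochhammer_div_ascPochhammer {T α : ℝ} (hT : 0 < T) (hα : -1 < α) (i : ℕ) :
    F T α i = √((2 * i + 1) / T) * T ^ (α + 1) * (descPochhammer ℝ i).eval α
      / (ascPochhammer ℝ (i + 1)).eval (α + 1) := by
  have hF : F T α i = √((2 * i + 1) / T) * ((i ! : ℝ) * T ^ i)⁻¹
      * ∫ t in 0..T, t ^ α * (derivative^[i] ((X * (X - C T)) ^ i)).eval t := by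
    rw [F, ← integral_const_mul]
    refine integral_congr fun t _ ↦ ?_
    simp only [legendreHat, legendreP_two_mul_div_sub_one hT.ne']
    ring
  have hsign : ((-1 : ℝ) ^ i) * (-1) ^ i = 1 := by rw [← mul_pow]; norm_num
  have hTpow : T ^ (α + i + 1) = T ^ (α + 1) * T ^ i := by
    rw [add_right_comm, rpow_add_natCast hT.ne']
  have hA : 0 < (ascPochhammer ℝ (i + 1)).eval (α + 1) := ascPochhammer_pos _ _ (by linarith)
  rw [hF, integral_rpow_mul_iterate_derivative_eval hT hα i dvd_rfl,
    integral_rpow_sub_mul_X_mul_X_sub_C_pow_eval hT.le, integral_rpow_mul_sub_pow hT hα, hTpow]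
  field_simp
  linear_combination (descPochhammer ℝ i).eval α * hsign

theorem legendre_coeff_power_recurrence (T α : ℝ) (hT : 0 < T) (hα : -(1/2 : ℝ) < α) :
    F T α 0 = T ^ α * Real.sqrt T / (α + 1) ∧
    ∀ i : ℕ, F T α (i + 1)
      = Real.sqrt ((2 * i + 3) / (2 * i + 1)) * ((α - i) / (α + i + 2)) * F T α i := by
  have hα' : -1 < α := by linarith
  refine ⟨?_, fun i ↦ ?_⟩
  · have hsqrt : √(1 / T) * T = √T := by
      rw [one_div, sqrt_inv, inv_mul_eq_div, div_sqrt]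
    rw [F_eq_descPochhammer_div_ascPochhammer hT hα' 0, rpow_add_one hT.ne']
    simp only [Nat.cast_zero, mul_zero, zero_add, descPochhammer_zero, ascPochhammer_one, eval_one,
      eval_X, mul_one]
    rw [mul_comm (T ^ α), ← mul_assoc, hsqrt]
    ring
  · have hsqrt : √((2 * ↑(i + 1) + 1) / T) = √((2 * i + 3) / (2 * i + 1)) * √((2 * i + 1) / T) := by
      rw [← sqrt_mul (by positivity)]
      congr 1
      field_simp
      push_cast
      ring
    have hA : 0 < (ascPochhammer ℝ (i + 1)).eval (α + 1) := ascPochhammer_pos _ _ (by linarith)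
    have hden : α + i + 2 ≠ 0 := by linarith [i.cast_nonneg (α := ℝ)]
    rw [F_eq_descPochhammer_div_ascPochhammer hT hα' (i + 1),
      F_eq_descPochhammer_div_ascPochhammer hT hα' i, hsqrt, descPochhammer_succ_eval,
      ascPochhammer_succ_eval (i + 1)]
    push_cast
    rw [show α + 1 + (i + 1) = α + i + 2 by ring]
    field_simp
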